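/- arXiv:math/0011259 — 3 statements merged into one kernel-verified Lean document; each statement's English description precedes it below -/
import Mathlib

section
/- The surface X₁₆₈ = {x₀⁴ + x₁x₂³ + x₂x₃³ + x₃x₁³ = 0} ⊂ P³ is a smooth quartic surface. -/
open MvPolynomial

/-- The homogeneous polynomial `x₀⁴ + x₁x₂³ + x₂x₃³ + x₃x₁³` defining the
Klein–Mukai quartic surface `X₁₆₈` in `P³`. -/
noncomputable def kleinMukaiQuartic : MvPolynomial (Fin 4) ℂ :=
  X 0 ^ 4 + X 1 * X 2 ^ 3 + X 2 * X 3 ^ 3 + X 3 * X 1 ^ 3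

/-- Auxiliary cube-vanishing helper. -/
lemma cube_zero {x : ℂ} (h : x ^ 3 = 0) : x = 0 :=
  pow_eq_zero_iff (by norm_num) |>.mp h

/-- The algebraic heart of the Jacobian criterion for the Klein–Mukai quartic. -/
lemma kleinMukai_jacobian {a b c : ℂ}
    (h1 : b ^ 3 + c * (3 * a ^ 2) = 0)
    (h2 : a * (3 * b ^ 2) + c ^ 3 = 0)
    (h3 : b * (3 * c ^ 2) + a ^ 3 = 0) :
    a = 0 ∧ b = 0 ∧ c = 0 := by
  have key : (28 : ℂ) * (a * b * c) ^ 3 = 0 := by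
    linear_combination (-3*b*c^5)*h1 + (9*a^2*b*c^3)*h2 + (b^3*c^3)*h3
  have habc : a * b * c = 0 := by
    apply cube_zero
    have h28 : (28 : ℂ) ≠ 0 := by norm_num
    exact (mul_eq_zero.mp key).resolve_left h28
  rcases mul_eq_zero.mp habc with h' | hc
  · rcases mul_eq_zero.mp h' with ha | hb
    · subst ha
      have hb : b = 0 := cube_zero (by linear_combination h1)
      subst hb
      exact ⟨rfl, rfl, cube_zero (by linear_combination h2)⟩
    · subst hb
      have hc : c = 0 := cube_zero (by linear_combination h2)
      subst hc
      exact ⟨cube_zero (by linear_combination h3), rfl, rfl⟩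
  · subst hc
    have hb : b = 0 := cube_zero (by linear_combination h1)
    subst hb
    exact ⟨cube_zero (by linear_combination h3), rfl, rfl⟩

/-- The surface `X₁₆₈ = {x₀⁴ + x₁x₂³ + x₂x₃³ + x₃x₁³ = 0} ⊂ P³` is a smooth quartic
surface: its defining polynomial is homogeneous of degree `4`, and by the Jacobian
criterion its four partial derivatives have no common zero other than the origin. -/
theorem kleinMukaiQuartic_smooth_quartic :
    kleinMukaiQuartic.IsHomogeneous 4 ∧
      ∀ p : Fin 4 → ℂ, (∀ i : Fin 4, eval p (pderiv i kleinMukaiQuartic) = 0) → p = 0 := by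
  constructor
  · have hx : ∀ i : Fin 4, (X i : MvPolynomial (Fin 4) ℂ).IsHomogeneous 1 :=
      fun i => isHomogeneous_X _ _
    have h1 : ((X 0 : MvPolynomial (Fin 4) ℂ) ^ 4).IsHomogeneous 4 := by
      simpa using (hx 0).pow 4
    have h2 : ((X 1 : MvPolynomial (Fin 4) ℂ) * X 2 ^ 3).IsHomogeneous 4 := by
      simpa using (hx 1).mul ((hx 2).pow 3)
    have h3 : ((X 2 : MvPolynomial (Fin 4) ℂ) * X 3 ^ 3).IsHomogeneous 4 := by
      simpa using (hx 2).mul ((hx 3).pow 3)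
    have h4 : ((X 3 : MvPolynomial (Fin 4) ℂ) * X 1 ^ 3).IsHomogeneous 4 := by
      simpa using (hx 3).mul ((hx 1).pow 3)
    exact ((h1.add h2).add h3).add h4
  · intro p h
    have h0 := h 0; have h1 := h 1; have h2 := h 2; have h3 := h 3
    simp [kleinMukaiQuartic, pderiv_X, Pi.single_apply] at h0 h1 h2 h3
    obtain ⟨ha, hb, hc⟩ := kleinMukai_jacobian h1 h2 h3
    funext i
    fin_cases i <;> simp [h0, ha, hb, hc]
end

section
/- Let C ⊆ F₂^24 be a binary linear code such that every nonzero codeword has weight 8, 12, 16, or 24, and such that every 5-element subset of coordinates is contained in the support of at least one weight-8 codeword. Then every 5-element subset is contained in the support of exactly one weight-8 codeword. -/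
/-- The support of a word in `F₂²⁴`: the set of coordinates where it is nonzero. -/
def codeSupport (v : Fin 24 → ZMod 2) : Finset (Fin 24) :=
  Finset.univ.filter fun i => v i ≠ 0

/-- The (Hamming) weight of a word in `F₂²⁴`. -/
def codeWeight (v : Fin 24 → ZMod 2) : ℕ := (codeSupport v).card

lemma support_add_subset (c c' : Fin 24 → ZMod 2) :
    codeSupport (c + c') ⊆ (codeSupport c \ codeSupport c') ∪ (codeSupport c' \ codeSupport c) := by
  intro i hi
  simp only [codeSupport, Finset.mem_filter, Finset.mem_univ, true_and, Pi.add_apply] at hi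
  simp only [Finset.mem_union, Finset.mem_sdiff, codeSupport, Finset.mem_filter,
    Finset.mem_univ, true_and, not_not]
  have key : ∀ a b : ZMod 2, a + b ≠ 0 → (a ≠ 0 ∧ ¬ b ≠ 0) ∨ (b ≠ 0 ∧ ¬ a ≠ 0) := by decide
  rcases key _ _ hi with ⟨h1, h2⟩ | ⟨h1, h2⟩
  · exact Or.inl ⟨h1, not_not.mp h2⟩
  · exact Or.inr ⟨h1, not_not.mp h2⟩

/-- Let `C ⊆ F₂²⁴` be a binary linear code such that every nonzero codeword has weight
`8`, `12`, `16`, or `24`, and such that every `5`-element subset of coordinates is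
contained in the support of at least one weight-`8` codeword. Then every `5`-element
subset of coordinates is contained in the support of exactly one weight-`8` codeword. -/
theorem steiner_property_of_code (C : Submodule (ZMod 2) (Fin 24 → ZMod 2))
    (hwt : ∀ c ∈ C, c ≠ 0 → codeWeight c = 8 ∨ codeWeight c = 12 ∨
      codeWeight c = 16 ∨ codeWeight c = 24)
    (hexists : ∀ S : Finset (Fin 24), S.card = 5 →
      ∃ c ∈ C, codeWeight c = 8 ∧ S ⊆ codeSupport c) :
    ∀ S : Finset (Fin 24), S.card = 5 →
      ∃! c : Fin 24 → ZMod 2, c ∈ C ∧ codeWeight c = 8 ∧ S ⊆ codeSupport c := by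
  intro S hS
  obtain ⟨c, hcC, hc8, hcS⟩ := hexists S hS
  refine ⟨c, ⟨hcC, hc8, hcS⟩, ?_⟩
  rintro c' ⟨hc'C, hc'8, hc'S⟩
  by_contra hne
  have hd0 : c' + c ≠ 0 := by
    intro h
    apply hne
    funext i
    have hi : c' i + c i = 0 := congrFun h i
    have key : ∀ a b : ZMod 2, a + b = 0 → a = b := by decide
    exact key _ _ hi
  have hdC : c' + c ∈ C := C.add_mem hc'C hcC
  -- weight of c' + c is at most 6
  have hsub := support_add_subset c' c
  have h1 : codeSupport c' \ codeSupport c ⊆ codeSupport c' \ S :=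
    Finset.sdiff_subset_sdiff le_rfl hcS
  have h2 : codeSupport c \ codeSupport c' ⊆ codeSupport c \ S :=
    Finset.sdiff_subset_sdiff le_rfl hc'S
  have hb1 : (codeSupport c' \ S).card = 3 := by
    rw [Finset.card_sdiff_of_subset hc'S]
    unfold codeWeight at hc'8; omega
  have hb2 : (codeSupport c \ S).card = 3 := by
    rw [Finset.card_sdiff_of_subset hcS]
    unfold codeWeight at hc8; omega
  have hle : codeWeight (c' + c) ≤ 6 := by
    unfold codeWeight
    calc (codeSupport (c' + c)).card
        ≤ ((codeSupport c' \ codeSupport c) ∪ (codeSupport c \ codeSupport c')).card :=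
          Finset.card_le_card hsub
      _ ≤ (codeSupport c' \ codeSupport c).card + (codeSupport c \ codeSupport c').card :=
          Finset.card_union_le _ _
      _ ≤ (codeSupport c' \ S).card + (codeSupport c \ S).card :=
          Nat.add_le_add (Finset.card_le_card h1) (Finset.card_le_card h2)
      _ = 6 := by omega
  have := hwt _ hdC hd0
  omega
end

section
/- Let T be a rank-2 lattice (free Z-module of rank 2 with a symmetric bilinear form) with an isometry τ of order 3 acting freely on T \ {0} whose minimal polynomial is x²+x+1. Then there is a basis e₁, e₂ of T with τ(e₁) = e₂, τ(e₂) = -(e₁+e₂), and the Gram matrix is m·[[2,-1],[-1,2]] for some integer m. -/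
/-!
Writing `τ` in a basis gives an integer matrix `M` with `M² + M + 1 = 0`, hence `tr M = -1` and
`det M = 1`. For `v` with coordinates `w`, `det (v, τ v)` is a binary quadratic form in `w` of
discriminant `tr² - 4 det = -3`; reduction of such forms shows that it takes a value `±1`, and then
`v, τ v` is a basis on which `τ` acts as required. Invariance of `B` under `τ` gives
`B(τv, τv) = B(v, v)` and `B(v, τv) = B(τv, -v - τv)`, which pins the Gram matrix down to a
multiple of `[[2, -1], [-1, 2]]`.
-/

theorem Int.exists_eq_one_of_discrim_eq_neg_three {p q r : ℤ} (hp : 0 < p)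
    (hd : q ^ 2 - 4 * p * r = -3) : ∃ x y : ℤ, p * x ^ 2 + q * x * y + r * y ^ 2 = 1 := by
  -- Substituting `x ↦ x + k y` moves `q` into `[-p, p)`; the new form then either has a smaller
  -- outer coefficient, or is reduced, which forces `p = 1`.
  obtain ⟨k, hk_ge, hk_lt⟩ : ∃ k : ℤ, -p ≤ q + 2 * p * k ∧ q + 2 * p * k < p := by
    refine ⟨-((q + p) / (2 * p)), ?_, ?_⟩ <;>
      linarith [Int.mul_ediv_add_emod (q + p) (2 * p),
        Int.emod_nonneg (q + p) (by omega : 2 * p ≠ 0),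
        Int.emod_lt_of_pos (q + p) (by omega : 0 < 2 * p)]
  have hd' : (q + 2 * p * k) ^ 2 - 4 * p * (p * k ^ 2 + q * k + r) = -3 := by
    linear_combination hd
  have hr' : 0 < p * k ^ 2 + q * k + r := by nlinarith [sq_nonneg (q + 2 * p * k)]
  by_cases hr'p : p * k ^ 2 + q * k + r < p
  · obtain ⟨x, y, hxy⟩ := Int.exists_eq_one_of_discrim_eq_neg_three hr'
      (q := -(q + 2 * p * k)) (r := p) (by linear_combination hd')
    exact ⟨y - k * x, -x, by linear_combination hxy⟩
  · have hp1 : p = 1 := by nlinarith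
    exact ⟨1, 0, by simp [hp1]⟩
termination_by p.toNat
decreasing_by omega

theorem Int.exists_isUnit_of_discrim_eq_neg_three {p q r : ℤ} (hd : q ^ 2 - 4 * p * r = -3) :
    ∃ x y : ℤ, IsUnit (p * x ^ 2 + q * x * y + r * y ^ 2) := by
  rcases lt_trichotomy p 0 with hp | rfl | hp
  · obtain ⟨x, y, hxy⟩ := exists_eq_one_of_discrim_eq_neg_three (p := -p) (q := -q) (r := -r)
      (by linarith) (by linear_combination hd)
    refine ⟨x, y, ?_⟩
    rw [show p * x ^ 2 + q * x * y + r * y ^ 2 = -1 by linear_combination -hxy]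
    exact isUnit_one.neg
  · nlinarith [sq_nonneg q]
  · obtain ⟨x, y, hxy⟩ := exists_eq_one_of_discrim_eq_neg_three hp hd
    exact ⟨x, y, hxy ▸ isUnit_one⟩

namespace Matrix

theorem trace_eq_neg_one_and_det_eq_one_of_mul_self_add_self_add_one_eq_zero
    {M : Matrix (Fin 2) (Fin 2) ℤ} (hM : M * M + M + 1 = 0) : M.trace = -1 ∧ M.det = 1 := by
  obtain ⟨a, b, c, d, rfl⟩ : ∃ a b c d, M = !![a, b; c, d] := ⟨_, _, _, _, M.eta_fin_two⟩
  have h00 : a * a + b * c + a + 1 = 0 := by simpa using congrFun₂ hM 0 0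
  have h01 : a * b + b * d + b = 0 := by simpa using congrFun₂ hM 0 1
  have h10 : c * a + d * c + c = 0 := by simpa using congrFun₂ hM 1 0
  have htr : a + d + 1 = 0 := by
    by_contra h
    have hb : b = 0 :=
      (mul_eq_zero.mp (by linear_combination h01 : b * (a + d + 1) = 0)).resolve_right h
    have hc : c = 0 :=
      (mul_eq_zero.mp (by linear_combination h10 : c * (a + d + 1) = 0)).resolve_right h
    subst hb hc
    nlinarith [sq_nonneg (2 * a + 1)]
  rw [trace_fin_two_of, det_fin_two_of]
  exact ⟨by linarith, by linear_combination -h00 + a * htr⟩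

theorem exists_isUnit_det_of_mul_self_add_self_add_one_eq_zero
    {M : Matrix (Fin 2) (Fin 2) ℤ} (hM : M * M + M + 1 = 0) :
    ∃ w : Fin 2 → ℤ, IsUnit (of ![w, M *ᵥ w]).det := by
  obtain ⟨htr, hdet⟩ := trace_eq_neg_one_and_det_eq_one_of_mul_self_add_self_add_one_eq_zero hM
  obtain ⟨a, b, c, d, rfl⟩ : ∃ a b c d, M = !![a, b; c, d] := ⟨_, _, _, _, M.eta_fin_two⟩
  rw [trace_fin_two_of] at htr
  rw [det_fin_two_of] at hdet
  obtain ⟨x, y, hxy⟩ := Int.exists_isUnit_of_discrim_eq_neg_three (p := c) (q := d - a) (r := -b)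
    (by linear_combination (a + d - 1) * htr - 4 * hdet)
  refine ⟨![x, y], ?_⟩
  convert hxy using 1
  simp only [det_fin_two, of_apply, cons_val_zero, cons_val_one, mulVec, dotProduct,
    Fin.sum_univ_two]
  ring

end Matrix

open Matrix in
theorem Module.Basis.exists_basis_of_sq_add_self_add_one_eq_zero {T : Type*} [AddCommGroup T]
    [Module ℤ T] (b : Module.Basis (Fin 2) ℤ T) (f : T →ₗ[ℤ] T)
    (hf : ∀ x, f (f x) + f x + x = 0) :
    ∃ b' : Module.Basis (Fin 2) ℤ T, f (b' 0) = b' 1 ∧ f (b' 1) = -(b' 0 + b' 1) := by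
  set M := LinearMap.toMatrix b b f
  have hM : M * M + M + 1 = 0 := by
    rw [← LinearMap.toMatrix_mul, ← LinearMap.toMatrix_one b, ← map_add, ← map_add,
      show f * f + f + 1 = 0 from LinearMap.ext hf, map_zero]
  obtain ⟨w, hw⟩ := exists_isUnit_det_of_mul_self_add_self_add_one_eq_zero hM
  set v := b.equivFun.symm w
  have hv : ⇑(b.repr v) = w := b.equivFun.apply_symm_apply w
  have hfv : ⇑(b.repr (f v)) = M *ᵥ w := by rw [← hv, LinearMap.toMatrix_mulVec_repr]
  have hdet : b.det ![v, f v] = (of ![w, M *ᵥ w]).det := by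
    rw [det_apply, ← det_transpose]
    congr 1
    ext i j
    fin_cases i <;> simp only [Fin.zero_eta, Fin.mk_one, toMatrix_apply, transpose_apply,
      of_apply, cons_val_zero, cons_val_one, hv, hfv]
  obtain ⟨hli, hsp⟩ := b.is_basis_iff_det.mpr (hdet ▸ hw)
  refine ⟨Module.Basis.mk hli hsp.ge, ?_, ?_⟩ <;>
    simp only [mk_apply, cons_val_zero, cons_val_one]
  · exact eq_neg_of_add_eq_zero_left (by rw [← hf v]; abel)

theorem LinearMap.BilinForm.exists_gram_eq_of_isometry {R M : Type*} [CommRing R]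
    [AddCommGroup M] [Module R M] (B : LinearMap.BilinForm R M) (hsymm : ∀ x y, B x y = B y x)
    (τ : M → M) (hisom : ∀ x y, B (τ x) (τ y) = B x y) {u v : M} (hu : τ u = v)
    (hv : τ v = -(u + v)) :
    ∃ m : R, B u u = 2 * m ∧ B u v = -m ∧ B v v = 2 * m := by
  have huu : B v v = B u u := by rw [← hu, hisom]
  have huv : B u v = -B v u - B v v := by
    rw [← hisom u v, hu, hv, map_neg, map_add, neg_add, sub_eq_add_neg]
  refine ⟨-B u v, ?_, (neg_neg _).symm, ?_⟩
  · linear_combination huv - huu + hsymm u v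
  · linear_combination huv + hsymm u v

theorem lattice_rank_two_order_three_isometry_general
    (T : Type*) [AddCommGroup T] [Module ℤ T] [Module.Free ℤ T]
    (hrk : Module.finrank ℤ T = 2)
    (B : LinearMap.BilinForm ℤ T) (hsymm : ∀ x y, B x y = B y x)
    (τ : T ≃ₗ[ℤ] T)
    (hisom : ∀ x y, B (τ x) (τ y) = B x y)
    (hmin : ∀ x : T, τ (τ x) + τ x + x = 0) :
    ∃ b : Module.Basis (Fin 2) ℤ T, τ (b 0) = b 1 ∧ τ (b 1) = -(b 0 + b 1) ∧
      ∃ m : ℤ, B (b 0) (b 0) = 2 * m ∧ B (b 0) (b 1) = -m ∧ B (b 1) (b 1) = 2 * m := by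
  have : Module.Finite ℤ T := Module.finite_of_finrank_pos (by omega)
  obtain ⟨b, hb0, hb1⟩ := Module.Basis.exists_basis_of_sq_add_self_add_one_eq_zero
    (Module.finBasisOfFinrankEq ℤ T hrk) τ.toLinearMap hmin
  exact ⟨b, hb0, hb1, B.exists_gram_eq_of_isometry hsymm τ hisom hb0 hb1⟩

/-- Let `T` be a rank-`2` lattice (a free `ℤ`-module of rank `2` with a symmetric
bilinear form `B`) and `τ` an isometry of `T` of order `3` acting freely on `T \ {0}`
with minimal polynomial `x² + x + 1` (i.e. `τ² + τ + 1 = 0`).  Then there is a basis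
`e₁, e₂` of `T` with `τ(e₁) = e₂` and `τ(e₂) = -(e₁ + e₂)`, and with respect to this
basis the Gram matrix is `m·[[2, -1], [-1, 2]]` for some integer `m`. -/
theorem lattice_rank_two_order_three_isometry
    (T : Type*) [AddCommGroup T] [Module ℤ T] [Module.Free ℤ T]
    (hrk : Module.finrank ℤ T = 2)
    (B : LinearMap.BilinForm ℤ T) (hsymm : ∀ x y, B x y = B y x)
    (τ : T ≃ₗ[ℤ] T)
    (hisom : ∀ x y, B (τ x) (τ y) = B x y)
    (horder : orderOf τ = 3)
    (hfree : ∀ x : T, x ≠ 0 → τ x ≠ x)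
    (hmin : ∀ x : T, τ (τ x) + τ x + x = 0) :
    ∃ b : Module.Basis (Fin 2) ℤ T, τ (b 0) = b 1 ∧ τ (b 1) = -(b 0 + b 1) ∧
      ∃ m : ℤ, B (b 0) (b 0) = 2 * m ∧ B (b 0) (b 1) = -m ∧ B (b 1) (b 1) = 2 * m :=
  lattice_rank_two_order_three_isometry_general T hrk B hsymm τ hisom hmin
end
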